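/- arXiv:1508.05554 — 6 statements merged into one kernel-verified Lean document; each statement's English description precedes it below -/
import Mathlib

section
/- Let m, n ∈ ℕ and let a = (a_i)_{i ∈ M(m,n)} be a complex matrix indexed by M(m,n) = {1,…,n}^m. For every nonempty subset S ⊆ M(m,n), ∑_{i ∈ S} |a_i| ≤ m · E(S) · ‖a‖_{ℓ_{m/(m-1),∞}}, where E(S) = max_{1≤k≤m} card{ i_k : i ∈ S } and ‖a‖_{ℓ_{m/(m-1),∞}} = sup_k k^{(m-1)/m} a*_k with a* the non-increasing rearrangement of (|a_i|). -/
/-!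
Order `S` by decreasing `|a_i|`: the `k`-th largest term is at most `a*_k`, so
`∑_{i ∈ S} |a_i| ≤ ∑_{k ≤ |S|} a*_k ≤ W ∑_{k ≤ |S|} k^{1/m - 1} ≤ m W |S|^{1/m}`, the last step by
concavity of `t ↦ t^{1/m}`. Finally `S` lies in the product of its `m` coordinate projections,
so `|S| ≤ E(S)^m`.
-/

open Finset

/-- The non-increasing rearrangement of a finite family of complex numbers:
`rearrF x k = inf {λ ≥ 0 : card {i : |x i| > λ} ≤ k}`, so that `x*_j = rearrF x (j-1)`. -/
noncomputable def rearrF {ι : Type*} [Fintype ι] (x : ι → ℂ) (k : ℕ) : ℝ :=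
  sInf {l : ℝ | 0 ≤ l ∧ Nat.card {i : ι // l < ‖x i‖} ≤ k}

section Rearrangement

variable {ι : Type*} [Fintype ι]

lemma rearrF_nonneg (x : ι → ℂ) (k : ℕ) : 0 ≤ rearrF x k :=
  Real.sInf_nonneg fun _ hl => hl.1

lemma le_rearrF {x : ι → ℂ} {k : ℕ} {v : ℝ} {T : Finset ι} (hT : k < #T)
    (hv : ∀ i ∈ T, v ≤ ‖x i‖) : v ≤ rearrF x k := by
  apply le_csInf
  · refine ⟨∑ i, ‖x i‖, sum_nonneg fun i _ => norm_nonneg _, ?_⟩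
    have : IsEmpty {i : ι // ∑ j, ‖x j‖ < ‖x i‖} :=
      ⟨fun ⟨i, hi⟩ => hi.not_ge (single_le_sum (fun j _ => norm_nonneg (x j)) (mem_univ i))⟩
    simp
  · rintro l ⟨-, hl⟩
    by_contra! hlv
    have hsub : T ⊆ univ.filter fun i => l < ‖x i‖ := fun i hi =>
      mem_filter.2 ⟨mem_univ i, hlv.trans_le (hv i hi)⟩
    have : #T ≤ Nat.card {i : ι // l < ‖x i‖} := by
      rw [Nat.card_eq_fintype_card, Fintype.card_subtype]
      exact card_le_card hsub
    omega

lemma sum_norm_le_sum_range_rearrF [DecidableEq ι] (x : ι → ℂ) (S : Finset ι) :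
    ∑ i ∈ S, ‖x i‖ ≤ ∑ k ∈ range #S, rearrF x k := by
  induction S using Finset.induction_on_min_value (fun i => ‖x i‖) with
  | empty => simp
  | insert i S hiS hmin ih =>
    have hi : ‖x i‖ ≤ rearrF x #S := by
      refine le_rearrF (T := insert i S) (by simp [hiS]) fun j hj => ?_
      rcases mem_insert.1 hj with rfl | hj
      exacts [le_rfl, hmin j hj]
    rw [sum_insert hiS, card_insert_of_notMem hiS, sum_range_succ, add_comm]
    exact add_le_add ih hi

end Rearrangement

lemma mul_rpow_sub_one_le_rpow_sub_rpow {x p : ℝ} (hx : 1 ≤ x) (hp₀ : 0 ≤ p) (hp₁ : p ≤ 1) :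
    p * x ^ (p - 1) ≤ x ^ p - (x - 1) ^ p := by
  have hx₀ : 0 < x := by linarith
  have hinv : x⁻¹ ≤ 1 := inv_le_one_of_one_le₀ hx
  have bernoulli : (1 + -x⁻¹) ^ p ≤ 1 + p * -x⁻¹ :=
    rpow_one_add_le_one_add_mul_self (by linarith) hp₀ hp₁
  have hfactor : (x - 1) ^ p = x ^ p * (1 + -x⁻¹) ^ p := by
    rw [← Real.mul_rpow hx₀.le (by linarith)]
    congr 1
    field_simp
    ring
  have hpow : x ^ (p - 1) = x ^ p * x⁻¹ := by
    rw [Real.rpow_sub_one hx₀.ne', div_eq_mul_inv]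
  have := mul_le_mul_of_nonneg_left bernoulli (Real.rpow_nonneg hx₀.le p)
  rw [hfactor, hpow]
  linarith

lemma sum_range_rpow_sub_one_le {p : ℝ} (hp₀ : 0 < p) (hp₁ : p ≤ 1) (N : ℕ) :
    ∑ k ∈ range N, ((k : ℝ) + 1) ^ (p - 1) ≤ (N : ℝ) ^ p / p := by
  rw [le_div_iff₀ hp₀, mul_comm, mul_sum]
  calc ∑ k ∈ range N, p * ((k : ℝ) + 1) ^ (p - 1)
      ≤ ∑ k ∈ range N, (((k + 1 : ℕ) : ℝ) ^ p - ((k : ℕ) : ℝ) ^ p) := by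
        refine sum_le_sum fun k _ => ?_
        simpa using mul_rpow_sub_one_le_rpow_sub_rpow (x := (k : ℝ) + 1) (by simp) hp₀.le hp₁
    _ = (N : ℝ) ^ p := by
        rw [sum_range_sub (fun k : ℕ => (k : ℝ) ^ p), Nat.cast_zero, Real.zero_rpow hp₀.ne',
          sub_zero]

theorem Finset.card_le_sup_card_image_pow {ι α : Type*} [Fintype ι] [DecidableEq ι]
    [DecidableEq α] (S : Finset (ι → α)) :
    #S ≤ (univ.sup fun k => #(S.image fun i => i k)) ^ Fintype.card ι :=
  calc #S ≤ #(Fintype.piFinset fun k => S.image fun i => i k) :=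
        card_le_card fun _ hi => Fintype.mem_piFinset.2 fun _ => mem_image_of_mem _ hi
    _ = ∏ k, #(S.image fun i => i k) := Fintype.card_piFinset _
    _ ≤ _ := prod_le_pow_card _ _ _ fun k _ => le_sup (f := fun k => #(S.image fun i => i k))
        (mem_univ k)

theorem stmt3_general (m n : ℕ) (hm : 1 ≤ m) (a : (Fin m → Fin n) → ℂ)
    (S : Finset (Fin m → Fin n)) (W : ℝ)
    (hW : ∀ k : ℕ, ((k : ℝ) + 1) ^ (((m : ℝ) - 1) / m) * rearrF a k ≤ W) :
    ∑ i ∈ S, ‖a i‖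
      ≤ (m : ℝ) * ((Finset.univ.sup fun k : Fin m => (S.image fun i => i k).card : ℕ) : ℝ) * W := by
  classical
  set E := Finset.univ.sup fun k : Fin m => (S.image fun i => i k).card
  have hm₀ : (0 : ℝ) < m := by exact_mod_cast hm
  have hW₀ : 0 ≤ W := (rearrF_nonneg a 0).trans (by simpa using hW 0)
  have hrearr (k : ℕ) : rearrF a k ≤ W * ((k : ℝ) + 1) ^ ((m : ℝ)⁻¹ - 1) := by
    have hpos : 0 < ((k : ℝ) + 1) ^ (((m : ℝ) - 1) / m) := by positivity
    have hexp : (m : ℝ)⁻¹ - 1 = -(((m : ℝ) - 1) / m) := by field_simp; ring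
    rw [hexp, Real.rpow_neg (by positivity), ← div_eq_mul_inv, le_div_iff₀' hpos]
    exact hW k
  have hcard : (#S : ℝ) ^ (m : ℝ)⁻¹ ≤ E := by
    rw [Real.rpow_inv_le_iff_of_pos (by positivity) (by positivity) hm₀, Real.rpow_natCast]
    exact_mod_cast (by simpa using S.card_le_sup_card_image_pow)
  calc ∑ i ∈ S, ‖a i‖
      ≤ ∑ k ∈ range #S, rearrF a k := sum_norm_le_sum_range_rearrF a S
    _ ≤ W * ∑ k ∈ range #S, ((k : ℝ) + 1) ^ ((m : ℝ)⁻¹ - 1) := by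
        rw [mul_sum]; exact sum_le_sum fun k _ => hrearr k
    _ ≤ W * ((#S : ℝ) ^ (m : ℝ)⁻¹ / (m : ℝ)⁻¹) := by
        gcongr
        exact sum_range_rpow_sub_one_le (by positivity)
          (inv_le_one_of_one_le₀ (by exact_mod_cast hm)) _
    _ ≤ m * E * W := by
        rw [div_inv_eq_mul, mul_comm (m : ℝ) E, mul_comm _ W]
        gcongr

/-- For a matrix `a` indexed by `M(m,n) = {1,…,n}^m`, every nonempty `S ⊆ M(m,n)` and
every upper bound `W` for the weak quasi-norm `‖a‖_{ℓ_{m/(m-1),∞}} = sup_k k^{(m-1)/m} a*_k`,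
one has `∑_{i ∈ S} |a_i| ≤ m · E(S) · W`, where
`E(S) = max_{1≤k≤m} card {i_k : i ∈ S}`. -/
theorem stmt3 (m n : ℕ) (hm : 1 ≤ m) (a : (Fin m → Fin n) → ℂ)
    (S : Finset (Fin m → Fin n)) (hS : S.Nonempty) (W : ℝ)
    (hW : ∀ k : ℕ, ((k : ℝ) + 1) ^ (((m : ℝ) - 1) / m) * rearrF a k ≤ W) :
    ∑ i ∈ S, ‖a i‖
      ≤ (m : ℝ) * ((Finset.univ.sup fun k : Fin m => (S.image fun i => i k).card : ℕ) : ℝ) * W :=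
  stmt3_general m n hm a S W hW
end

section
/- Let m, n ∈ ℕ, m ≥ 2. For each matrix a = (a_i)_{i ∈ M(m,n)}, the index set M(m,n) = {1,…,n}^m can be written as a union of m subsets S_1,…,S_m such that for every k, max over j ∈ {1,…,n} of ∑_{i ∈ M(m,n), i_k = j, i ∈ S_k} |a_i| ≤ m‖a‖_{ℓ_{m/(m-1),∞}}. -/
/-!
Give every line `{i : i k = j}` of `M(m,n)` the capacity `W` and look for a fractional
assignment of the mass `‖a i‖` of each index `i` to the `m` lines through it. By a fractional
Hall theorem (a flow of maximal value saturates every index, since otherwise an augmenting path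
would exist) this is possible as soon as every set `B` of indices has mass at most `W` times the
number of lines meeting `B`. The weak-norm bound gives mass `≤ m W |B|^{1/m}`, and as `B` lies in
the product of its `m` coordinate projections, AM-GM bounds `m |B|^{1/m}` by the number of lines
meeting `B`. Finally `i` goes into `S k` for a line `k` carrying the largest share of its mass,
which is at least `‖a i‖ / m`.
-/

open Finset

lemma mul_rpow_sub_one_le_rpow_sub_rpow_s4 {θ x : ℝ} (hθ0 : 0 ≤ θ) (hθ1 : θ ≤ 1) (hx : 0 ≤ x) :
    θ * (x + 1) ^ (θ - 1) ≤ (x + 1) ^ θ - x ^ θ := by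
  have hx1 : 0 < x + 1 := by linarith
  have hbern := rpow_one_add_le_one_add_mul_self (s := -(x + 1)⁻¹)
    (by rw [neg_le_neg_iff]; exact inv_le_one_of_one_le₀ (by linarith)) hθ0 hθ1
  have hbase : 1 + -(x + 1)⁻¹ = x / (x + 1) := by field_simp; ring
  rw [hbase, Real.div_rpow hx hx1.le, div_le_iff₀ (by positivity)] at hbern
  rw [Real.rpow_sub_one hx1.ne']
  have : (1 + θ * -(x + 1)⁻¹) * (x + 1) ^ θ = (x + 1) ^ θ - θ * ((x + 1) ^ θ / (x + 1)) := by
    field_simp; ring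
  linarith

lemma sum_rpow_sub_one_le {θ : ℝ} (hθ0 : 0 < θ) (hθ1 : θ ≤ 1) (T : ℕ) :
    ∑ t ∈ range T, ((t : ℝ) + 1) ^ (θ - 1) ≤ (T : ℝ) ^ θ / θ := by
  rw [le_div_iff₀ hθ0, sum_mul]
  calc ∑ t ∈ range T, ((t : ℝ) + 1) ^ (θ - 1) * θ
      ≤ ∑ t ∈ range T, ((((t + 1 : ℕ) : ℝ)) ^ θ - ((t : ℕ) : ℝ) ^ θ) := by
        gcongr with t
        push_cast
        linarith [mul_rpow_sub_one_le_rpow_sub_rpow_s4 hθ0.le hθ1 (Nat.cast_nonneg (α := ℝ) t)]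
    _ = (T : ℝ) ^ θ := by
        rw [sum_range_sub (fun t : ℕ => ((t : ℝ)) ^ θ)]
        simp [Real.zero_rpow hθ0.ne']

section Rearrangement

variable {ι : Type*} [Fintype ι]

lemma norm_le_rearrF {x : ι → ℂ} {i : ι} {t : ℕ} (h : t + 1 ≤ #{i' | ‖x i‖ ≤ ‖x i'‖}) :
    ‖x i‖ ≤ rearrF x t := by
  have hbdd : ∑ i', ‖x i'‖ ∈ {l : ℝ | 0 ≤ l ∧ Nat.card {i : ι // l < ‖x i‖} ≤ t} := by
    refine ⟨sum_nonneg fun _ _ => norm_nonneg _, ?_⟩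
    have : IsEmpty {i : ι // ∑ i', ‖x i'‖ < ‖x i‖} :=
      ⟨fun ⟨i, hi⟩ => (single_le_sum (fun i' _ => norm_nonneg (x i')) (mem_univ i)).not_gt hi⟩
    simp
  refine le_csInf ⟨_, hbdd⟩ fun l ⟨_, hl⟩ => ?_
  by_contra! hlt
  have : #{i' | ‖x i‖ ≤ ‖x i'‖} ≤ Nat.card {i' : ι // l < ‖x i'‖} := by
    rw [Nat.card_eq_fintype_card, Fintype.card_subtype]
    exact card_le_card fun i' hi' => mem_filter.2 ⟨mem_univ i', hlt.trans_le (mem_filter.1 hi').2⟩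
  omega

lemma sum_norm_le_sum_rearrF [DecidableEq ι] (x : ι → ℂ) (B : Finset ι) :
    ∑ i ∈ B, ‖x i‖ ≤ ∑ t ∈ range #B, rearrF x t := by
  induction B using Finset.induction_on_min_value (fun i => ‖x i‖) with
  | empty => simp
  | insert a s ha hmin ih =>
    have hcard : #s + 1 ≤ #{i' | ‖x a‖ ≤ ‖x i'‖} := by
      rw [← card_insert_of_notMem ha]
      refine card_le_card fun i hi => ?_
      rcases mem_insert.1 hi with rfl | hi
      · exact mem_filter.2 ⟨mem_univ _, le_rfl⟩
      · exact mem_filter.2 ⟨mem_univ i, hmin i hi⟩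
    rw [sum_insert ha, card_insert_of_notMem ha, sum_range_succ]
    linarith [norm_le_rearrF hcard]

lemma nonneg_of_rpow_mul_rearrF_le {x : ι → ℂ} {r W : ℝ}
    (hW : ∀ k : ℕ, ((k : ℝ) + 1) ^ r * rearrF x k ≤ W) : 0 ≤ W := by
  have h := hW 0
  simp only [Nat.cast_zero, zero_add, Real.one_rpow, one_mul] at h
  exact (rearrF_nonneg x 0).trans h

lemma sum_norm_le_of_rpow_mul_rearrF_le [DecidableEq ι] {x : ι → ℂ}
    {θ W : ℝ} (hθ0 : 0 < θ) (hθ1 : θ ≤ 1)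
    (hW : ∀ k : ℕ, ((k : ℝ) + 1) ^ (1 - θ) * rearrF x k ≤ W) (B : Finset ι) :
    ∑ i ∈ B, ‖x i‖ ≤ W * (#B : ℝ) ^ θ / θ := by
  have hterm : ∀ t : ℕ, rearrF x t ≤ W * ((t : ℝ) + 1) ^ (θ - 1) := fun t => by
    have hpos : 0 < ((t : ℝ) + 1) ^ (1 - θ) := by positivity
    rw [show θ - 1 = -(1 - θ) by ring, Real.rpow_neg (by positivity), ← div_eq_mul_inv,
      le_div_iff₀ hpos, mul_comm]
    exact hW t
  calc ∑ i ∈ B, ‖x i‖ ≤ ∑ t ∈ range #B, rearrF x t := sum_norm_le_sum_rearrF x B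
    _ ≤ W * ∑ t ∈ range #B, ((t : ℝ) + 1) ^ (θ - 1) := by
        rw [mul_sum]; exact sum_le_sum fun t _ => hterm t
    _ ≤ W * (#B : ℝ) ^ θ / θ := by
        rw [mul_div_assoc]
        exact mul_le_mul_of_nonneg_left (sum_rpow_sub_one_le hθ0 hθ1 _)
          (nonneg_of_rpow_mul_rearrF_le hW)

end Rearrangement

section FractionalHall

variable {α β : Type*}

def flowReach (N : α → Finset β) (x : α → β → ℝ) (i₀ : α) : ℕ → Set β
  | 0 => {s | s ∈ N i₀}
  | p + 1 => {s | ∃ i, ∃ s' ∈ flowReach N x i₀ p, 0 < x i s' ∧ s ∈ N i}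

lemma flowReach_mono {N : α → Finset β} {x y : α → β → ℝ} (h : ∀ i s, 0 < x i s → 0 < y i s)
    (i₀ : α) : ∀ p, flowReach N x i₀ p ⊆ flowReach N y i₀ p
  | 0 => subset_rfl
  | p + 1 => fun _ ⟨i, s', hs', hpos, hs⟩ => ⟨i, s', flowReach_mono h i₀ p hs', h i s' hpos, hs⟩

variable [Fintype α] [Fintype β] (N : α → Finset β) (v : α → ℝ) (c : β → ℝ)

structure IsSubflow (x : α → β → ℝ) : Prop where
  nonneg : ∀ i s, 0 ≤ x i s
  eq_zero_of_notMem : ∀ i s, s ∉ N i → x i s = 0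
  sum_le_supply : ∀ i, ∑ s, x i s ≤ v i
  sum_le_capacity : ∀ s, ∑ i, x i s ≤ c s

variable {N v c}

lemma exists_isSubflow_isMax (hv : ∀ i, 0 ≤ v i) (hc : ∀ s, 0 ≤ c s) :
    ∃ x, IsSubflow N v c x ∧
      ∀ y, IsSubflow N v c y → ∑ i, ∑ s, y i s ≤ ∑ i, ∑ s, x i s := by
  have hclosed : IsClosed {x : α → β → ℝ | IsSubflow N v c x} := by
    have : {x : α → β → ℝ | IsSubflow N v c x} =
        {x | ∀ i s, 0 ≤ x i s} ∩ {x | ∀ i s, s ∉ N i → x i s = 0} ∩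
          {x | ∀ i, ∑ s, x i s ≤ v i} ∩ {x | ∀ s, ∑ i, x i s ≤ c s} := by
      ext x
      exact ⟨fun h => ⟨⟨⟨h.1, h.2⟩, h.3⟩, h.4⟩, fun ⟨⟨⟨h₁, h₂⟩, h₃⟩, h₄⟩ => ⟨h₁, h₂, h₃, h₄⟩⟩
    rw [this]
    simp only [Set.ofPred_forall]
    refine ((isClosed_iInter fun i => isClosed_iInter fun s => ?_).inter
      (isClosed_iInter fun i => isClosed_iInter fun s => isClosed_iInter fun _ => ?_)).inter
      (isClosed_iInter fun i => ?_) |>.inter (isClosed_iInter fun s => ?_)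
    · exact isClosed_le continuous_const (by fun_prop)
    · exact isClosed_eq (by fun_prop) continuous_const
    · exact isClosed_le (by fun_prop) continuous_const
    · exact isClosed_le (by fun_prop) continuous_const
  have hbox : {x : α → β → ℝ | IsSubflow N v c x} ⊆
      Set.univ.pi fun i => Set.univ.pi fun _ => Set.Icc 0 (v i) := fun x hx i _ s _ =>
    ⟨hx.nonneg i s, (single_le_sum (fun t _ => hx.nonneg i t) (mem_univ s)).trans
      (hx.sum_le_supply i)⟩
  have hcompact := (isCompact_univ_pi fun i => isCompact_univ_pi fun _ =>
    isCompact_Icc).of_isClosed_subset hclosed hbox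
  have hzero : IsSubflow N v c 0 :=
    ⟨fun _ _ => le_rfl, fun _ _ _ => rfl, fun i => by simpa using hv i,
      fun s => by simpa using hc s⟩
  obtain ⟨x, hx, hmax⟩ := hcompact.exists_isMaxOn ⟨0, hzero⟩
    (by fun_prop : Continuous fun x : α → β → ℝ => ∑ i, ∑ s, x i s).continuousOn
  exact ⟨x, hx, fun y hy => hmax hy⟩

omit [Fintype α] in
lemma sum_ite_and_eq_left [DecidableEq α] [DecidableEq β] (i i' : α) (s : β) (δ : ℝ) :
    ∑ t, (if i' = i ∧ t = s then δ else 0) = if i' = i then δ else 0 := by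
  simp [ite_and]

omit [Fintype β] in
lemma sum_ite_and_eq_right [DecidableEq α] [DecidableEq β] (i : α) (s t : β) (δ : ℝ) :
    ∑ i', (if i' = i ∧ t = s then δ else 0) = if t = s then δ else 0 := by
  simp [ite_and]

namespace IsSubflow

variable [DecidableEq α] [DecidableEq β] {x : α → β → ℝ} {i : α} {s s' : β}

lemma add_single (hx : IsSubflow N v c x) (hs : s ∈ N i) {δ : ℝ} (hδ : 0 ≤ δ)
    (hrow : ∑ t, x i t + δ ≤ v i) (hcol : ∑ t, x t s + δ ≤ c s) :
    IsSubflow N v c fun i' t => x i' t + if i' = i ∧ t = s then δ else 0 where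
  nonneg i' t := add_nonneg (hx.nonneg i' t) (ite_nonneg hδ le_rfl)
  eq_zero_of_notMem i' t ht := by
    rw [hx.eq_zero_of_notMem i' t ht, if_neg (by rintro ⟨rfl, rfl⟩; exact ht hs), add_zero]
  sum_le_supply i' := by
    rw [sum_add_distrib, sum_ite_and_eq_left]
    split_ifs with h
    · exact h ▸ hrow
    · simpa using hx.sum_le_supply i'
  sum_le_capacity t := by
    rw [sum_add_distrib, sum_ite_and_eq_right]
    split_ifs with h
    · exact h ▸ hcol
    · simpa using hx.sum_le_capacity t

lemma shift (hx : IsSubflow N v c x) (hs : s ∈ N i) (hs' : s' ∈ N i) {η : ℝ} (hη : 0 ≤ η)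
    (hηx : η ≤ x i s') (hcol : ∑ t, x t s + η ≤ c s) :
    IsSubflow N v c fun i' t =>
      x i' t - (if i' = i ∧ t = s' then η else 0) + if i' = i ∧ t = s then η else 0 where
  nonneg i' t := by
    have := hx.nonneg i' t
    split_ifs with h₁ h₂ <;> (try obtain ⟨rfl, rfl⟩ := h₁) <;> linarith
  eq_zero_of_notMem i' t ht := by
    rw [hx.eq_zero_of_notMem i' t ht, if_neg (by rintro ⟨rfl, rfl⟩; exact ht hs'),
      if_neg (by rintro ⟨rfl, rfl⟩; exact ht hs)]
    simp
  sum_le_supply i' := by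
    rw [sum_add_distrib, sum_sub_distrib, sum_ite_and_eq_left, sum_ite_and_eq_left]
    simpa using hx.sum_le_supply i'
  sum_le_capacity t := by
    rw [sum_add_distrib, sum_sub_distrib, sum_ite_and_eq_right, sum_ite_and_eq_right]
    have h₀ : (0 : ℝ) ≤ if t = s' then η else 0 := ite_nonneg hη le_rfl
    by_cases ht : t = s
    · subst ht
      rw [if_pos rfl]
      linarith
    · rw [if_neg ht]
      linarith [hx.sum_le_capacity t]

lemma exists_sum_lt_of_mem (hx : IsSubflow N v c x) (hs : s ∈ N i) (hi : ∑ t, x i t < v i)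
    (hslack : ∑ t, x t s < c s) :
    ∃ y, IsSubflow N v c y ∧ ∑ i, ∑ s, x i s < ∑ i, ∑ s, y i s := by
  set δ := min (v i - ∑ t, x i t) (c s - ∑ t, x t s)
  have hδ : 0 < δ := lt_min (by linarith) (by linarith)
  have hδv : δ ≤ v i - ∑ t, x i t := min_le_left _ _
  have hδc : δ ≤ c s - ∑ t, x t s := min_le_right _ _
  refine ⟨_, hx.add_single hs hδ.le (by linarith) (by linarith), ?_⟩
  simp only [sum_add_distrib, sum_ite_and_eq_left, sum_ite_eq', mem_univ, if_true]
  linarith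

end IsSubflow

lemma exists_sum_lt_of_mem_flowReach {x : α → β → ℝ} (hx : IsSubflow N v c x) {i₀ : α}
    (hi₀ : ∑ s, x i₀ s < v i₀) (p : ℕ) {s : β} (hs : s ∈ flowReach N x i₀ p)
    (hslack : ∑ i, x i s < c s) :
    ∃ y, IsSubflow N v c y ∧ ∑ i, ∑ s, x i s < ∑ i, ∑ s, y i s := by
  classical
  induction p generalizing x s with
  | zero => exact hx.exists_sum_lt_of_mem hs hi₀ hslack
  | succ p ih =>
    obtain ⟨i, s', hs', hpos, hsN⟩ := hs
    by_cases hss : s' = s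
    · exact ih hx hi₀ (hss ▸ hs') (hss ▸ hslack)
    -- Moving a little of the flow of `i` from `s'` to `s` keeps the total and frees room at `s'`.
    set ε := min (x i s') (c s - ∑ i, x i s)
    have hε : 0 < ε := lt_min hpos (by linarith)
    have hεx : ε ≤ x i s' := min_le_left _ _
    have hεc : ε ≤ c s - ∑ i, x i s := min_le_right _ _
    have hs'N : s' ∈ N i := by
      by_contra h
      exact hpos.ne' (hx.eq_zero_of_notMem i s' h)
    set y : α → β → ℝ := fun i' t =>
      x i' t - (if i' = i ∧ t = s' then ε / 2 else 0) + if i' = i ∧ t = s then ε / 2 else 0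
    have hy : IsSubflow N v c y := hx.shift hsN hs'N (by positivity) (by linarith) (by linarith)
    have hrow : ∀ i', ∑ t, y i' t = ∑ t, x i' t := fun i' => by
      simp only [y, sum_add_distrib, sum_sub_distrib, sum_ite_and_eq_left]
      ring
    have hpos_y : ∀ i' t, 0 < x i' t → 0 < y i' t := fun i' t h => by
      simp only [y]
      split_ifs with h₁ h₂
      · exact absurd (h₁.2.symm.trans h₂.2) hss
      · obtain ⟨rfl, rfl⟩ := h₁
        linarith
      all_goals linarith
    have hcol : ∑ i', y i' s' = ∑ i', x i' s' - ε / 2 := by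
      simp [y, sum_sub_distrib, ite_and, hss]
    obtain ⟨z, hz, hlt⟩ := ih hy (hrow i₀ ▸ hi₀) (flowReach_mono hpos_y i₀ p hs')
      (by linarith [hx.sum_le_capacity s'])
    exact ⟨z, hz, by simpa only [hrow] using hlt⟩

variable [DecidableEq β]

lemma IsSubflow.sum_sum_eq_sum_filter_subset {x : α → β → ℝ} (hx : IsSubflow N v c x)
    (R : Finset β) (hR : ∀ i, ∀ s ∈ R, 0 < x i s → N i ⊆ R) :
    ∑ s ∈ R, ∑ i, x i s = ∑ i with N i ⊆ R, ∑ s, x i s := by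
  rw [sum_comm, sum_filter]
  refine sum_congr rfl fun i _ => ?_
  split_ifs with hi
  · exact sum_subset (subset_univ R) fun s _ hs => hx.eq_zero_of_notMem i s fun h => hs (hi h)
  · exact sum_eq_zero fun s hs =>
      (hx.nonneg i s).eq_or_lt.elim Eq.symm fun h => absurd (hR i s hs h) hi

theorem exists_isSubflow_sum_eq (hv : ∀ i, 0 ≤ v i) (hc : ∀ s, 0 ≤ c s)
    (hall : ∀ B : Finset α, ∑ i ∈ B, v i ≤ ∑ s ∈ B.biUnion N, c s) :
    ∃ x, IsSubflow N v c x ∧ ∀ i, ∑ s, x i s = v i := by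
  classical
  obtain ⟨x, hx, hmax⟩ := exists_isSubflow_isMax hv hc
  refine ⟨x, hx, fun i₀ => (hx.sum_le_supply i₀).eq_of_not_lt fun hi₀ => ?_⟩
  have hfull : ∀ p, ∀ s ∈ flowReach N x i₀ p, c s ≤ ∑ i, x i s := fun p s hs =>
    not_lt.1 fun hlt => by
      obtain ⟨y, hy, hlt'⟩ := exists_sum_lt_of_mem_flowReach hx hi₀ p hs hlt
      exact (hmax y hy).not_gt hlt'
  set R : Finset β := {s | ∃ p, s ∈ flowReach N x i₀ p}
  have hR : ∀ i, ∀ s ∈ R, 0 < x i s → N i ⊆ R := fun i s hs hpos t ht => by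
    obtain ⟨p, hp⟩ := (mem_filter.1 hs).2
    exact mem_filter.2 ⟨mem_univ t, p + 1, i, s, hp, hpos, ht⟩
  have hi₀B : i₀ ∈ ({i | N i ⊆ R} : Finset α) :=
    mem_filter.2 ⟨mem_univ i₀, fun s hs => mem_filter.2 ⟨mem_univ s, 0, hs⟩⟩
  refine lt_irrefl (∑ s ∈ R, c s) ?_
  calc ∑ s ∈ R, c s
      ≤ ∑ s ∈ R, ∑ i, x i s := sum_le_sum fun s hs => by
        obtain ⟨p, hp⟩ := (mem_filter.1 hs).2
        exact hfull p s hp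
    _ = ∑ i with N i ⊆ R, ∑ s, x i s := hx.sum_sum_eq_sum_filter_subset R hR
    _ < ∑ i with N i ⊆ R, v i := sum_lt_sum (fun i _ => hx.sum_le_supply i) ⟨i₀, hi₀B, hi₀⟩
    _ ≤ ∑ s ∈ ({i | N i ⊆ R} : Finset α).biUnion N, c s := hall _
    _ ≤ ∑ s ∈ R, c s := sum_le_sum_of_subset_of_nonneg
        (biUnion_subset.2 fun i hi => (mem_filter.1 hi).2) fun s _ _ => hc s

lemma IsSubflow.exists_sum_le_mul {x : α → β → ℝ} (hx : IsSubflow N v c x)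
    (hsat : ∀ i, ∑ s, x i s = v i) (hN : ∀ i, (N i).Nonempty) {d : ℕ} (hd : ∀ i, #(N i) ≤ d) :
    ∃ σ : α → β, (∀ i, σ i ∈ N i) ∧ ∀ s, ∑ i with σ i = s, v i ≤ d * c s := by
  choose σ hσN hσmax using fun i => (N i).exists_max_image (x i) (hN i)
  refine ⟨σ, hσN, fun s => ?_⟩
  have hv : ∀ i, v i ≤ d * x i (σ i) := fun i => calc
    v i = ∑ t ∈ N i, x i t := (hsat i).symm.trans
        (sum_subset (subset_univ _) fun t _ ht => hx.eq_zero_of_notMem i t ht).symm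
    _ ≤ ∑ _t ∈ N i, x i (σ i) := sum_le_sum fun t ht => hσmax i t ht
    _ = #(N i) * x i (σ i) := by rw [sum_const, nsmul_eq_mul]
    _ ≤ d * x i (σ i) := mul_le_mul_of_nonneg_right (by exact_mod_cast hd i) (hx.nonneg _ _)
  calc ∑ i with σ i = s, v i
      ≤ ∑ i with σ i = s, d * x i s := sum_le_sum fun i hi => by
        rw [← (mem_filter.1 hi).2]; exact hv i
    _ ≤ ∑ i, d * x i s := sum_le_sum_of_subset_of_nonneg (filter_subset _ _) fun i _ _ =>
        mul_nonneg (Nat.cast_nonneg _) (hx.nonneg i s)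
    _ ≤ d * c s := by
        rw [← mul_sum]
        exact mul_le_mul_of_nonneg_left (hx.sum_le_capacity s) (Nat.cast_nonneg _)

end FractionalHall

section Graph

variable {κ γ : Type*} [Fintype κ] [DecidableEq κ] [DecidableEq γ]

def graphFinset (f : κ → γ) : Finset (κ × γ) := univ.image fun k => (k, f k)

lemma card_le_prod_card_image_eval (B : Finset (κ → γ)) : #B ≤ ∏ k, #(B.image fun f => f k) :=
  calc #B ≤ #(Fintype.piFinset fun k => B.image fun f => f k) :=
        card_le_card fun _ hf => Fintype.mem_piFinset.2 fun _ => mem_image_of_mem _ hf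
    _ = ∏ k, #(B.image fun f => f k) := Fintype.card_piFinset _

lemma card_biUnion_graphFinset (B : Finset (κ → γ)) :
    #(B.biUnion graphFinset) = ∑ k, #(B.image fun f => f k) := by
  have : B.biUnion graphFinset =
      univ.biUnion fun k => (B.image fun f => f k).map ⟨Prod.mk k, Prod.mk_right_injective k⟩ := by
    ext ⟨k, j⟩
    simp [graphFinset]
  rw [this, card_biUnion]
  · simp
  · intro k _ k' _ hkk'
    simp [disjoint_left, Ne.symm hkk']

lemma card_mul_rpow_le_card_biUnion_graphFinset [Nonempty κ] (B : Finset (κ → γ)) :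
    (Fintype.card κ : ℝ) * (#B : ℝ) ^ (Fintype.card κ : ℝ)⁻¹ ≤ #(B.biUnion graphFinset) := by
  set r : κ → ℝ := fun k => #(B.image fun f => f k)
  have hd : (0 : ℝ) < Fintype.card κ := by exact_mod_cast Fintype.card_pos
  have hamgm := Real.geom_mean_le_arith_mean univ (fun _ => 1) r (fun _ _ => zero_le_one)
    (by simpa using hd) (fun _ _ => Nat.cast_nonneg _)
  simp only [Real.rpow_one, sum_const, card_univ, nsmul_eq_mul, mul_one, one_mul] at hamgm
  calc (Fintype.card κ : ℝ) * (#B : ℝ) ^ (Fintype.card κ : ℝ)⁻¹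
      ≤ Fintype.card κ * (∏ k, r k) ^ (Fintype.card κ : ℝ)⁻¹ := by
        gcongr
        simp only [r]
        exact_mod_cast card_le_prod_card_image_eval B
    _ ≤ Fintype.card κ * ((∑ k, r k) / Fintype.card κ) := by gcongr
    _ = #(B.biUnion graphFinset) := by
        rw [mul_div_cancel₀ _ hd.ne', card_biUnion_graphFinset]
        push_cast
        rfl

end Graph

/-- For each matrix `a` indexed by `M(m,n) = {1,…,n}^m` (with `m ≥ 2`), the index set
splits into a union of `m` subsets `S_1, …, S_m` such that for every `k` and every
`j ∈ {1,…,n}`, `∑_{i ∈ S_k, i_k = j} |a_i| ≤ m · W`, where `W` is any upper bound for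
the weak quasi-norm `‖a‖_{ℓ_{m/(m-1),∞}} = sup_k k^{(m-1)/m} a*_k`. -/
theorem stmt4 (m n : ℕ) (hm : 2 ≤ m) (a : (Fin m → Fin n) → ℂ) (W : ℝ)
    (hW : ∀ k : ℕ, ((k : ℝ) + 1) ^ (((m : ℝ) - 1) / m) * rearrF a k ≤ W) :
    ∃ S : Fin m → Finset (Fin m → Fin n),
      (∀ i : Fin m → Fin n, ∃ k : Fin m, i ∈ S k) ∧
      ∀ (k : Fin m) (j : Fin n),
        ∑ i ∈ (S k).filter (fun i => i k = j), ‖a i‖ ≤ (m : ℝ) * W := by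
  classical
  have hm0 : 0 < m := by omega
  have : Nonempty (Fin m) := ⟨⟨0, hm0⟩⟩
  rw [show ((m : ℝ) - 1) / m = 1 - (m : ℝ)⁻¹ by field_simp] at hW
  have hall (B : Finset (Fin m → Fin n)) : ∑ i ∈ B, ‖a i‖ ≤ ∑ _s ∈ B.biUnion graphFinset, W :=
    calc ∑ i ∈ B, ‖a i‖ ≤ W * (#B : ℝ) ^ (m : ℝ)⁻¹ / (m : ℝ)⁻¹ :=
          sum_norm_le_of_rpow_mul_rearrF_le (by positivity)
            (inv_le_one_of_one_le₀ (by exact_mod_cast hm0)) hW B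
      _ = W * (m * (#B : ℝ) ^ (m : ℝ)⁻¹) := by field_simp
      _ ≤ W * #(B.biUnion graphFinset) := by
          gcongr
          · exact nonneg_of_rpow_mul_rearrF_le hW
          · simpa using card_mul_rpow_le_card_biUnion_graphFinset B
      _ = ∑ _s ∈ B.biUnion graphFinset, W := by rw [sum_const, nsmul_eq_mul, mul_comm]
  obtain ⟨x, hx, hsat⟩ := exists_isSubflow_sum_eq (fun i => norm_nonneg (a i))
    (fun _ => nonneg_of_rpow_mul_rearrF_le hW) hall
  obtain ⟨σ, hσ, hσW⟩ := hx.exists_sum_le_mul hsat (fun _ => univ_nonempty.image _) (d := m)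
    fun _ => card_image_le.trans (by simp)
  refine ⟨fun k => {i | (σ i).1 = k}, fun i => ⟨(σ i).1, by simp⟩, fun k j => ?_⟩
  refine (sum_le_sum_of_subset_of_nonneg (fun i hi => ?_) fun i _ _ => norm_nonneg (a i)).trans
    (hσW (k, j))
  obtain ⟨k', -, hk'⟩ := mem_image.1 (hσ i)
  simp only [mem_filter, mem_univ, true_and, ← hk'] at hi ⊢
  obtain ⟨rfl, rfl⟩ := hi
  rfl
end

section
/- Let m, n ∈ ℕ and let a be an n×n complex matrix with |a_{rs}| = 1 for all r,s and ∑_{k=1}^n a_{rk} conj(a_{sk}) = n·δ_{rs}. Define the m-linear form A(x^1,…,x^m) = ∑_{i_1,…,i_m=1}^n a_{i_1 i_2} a_{i_2 i_3} ⋯ a_{i_{m-1} i_m} x^1_{i_1} ⋯ x^m_{i_m}. Then for all vectors x^1,…,x^m ∈ ℂ^n with sup-norm ≤ 1, |A(x^1,…,x^m)| ≤ n^{(m+1)/2}. -/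
/-!
Write the form as `∑ⱼ vⱼ` with `v = x¹ ⊙ a (x² ⊙ a (⋯ ⊙ a xᵐ))`, `⊙` the entrywise product.
Since `a aᴴ = n • 1` forces `aᴴ a = n • 1`, multiplying by `a` scales the squared `ℓ²`-norm by
exactly `n`, while multiplying entrywise by a vector of sup-norm `≤ 1` does not increase it.
Hence `‖v‖₂² ≤ n ^ m`, and Cauchy–Schwarz gives `|∑ⱼ vⱼ| ≤ √n ‖v‖₂ ≤ n ^ ((m + 1) / 2)`.
-/

open scoped ComplexConjugate Matrix

namespace Matrix

variable {ι R : Type*} [Fintype ι] [DecidableEq ι]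

theorem mul_eq_smul_one_comm {K : Type*} [Field K] {A B : Matrix ι ι K} {c : K} (hc : c ≠ 0)
    (h : A * B = c • 1) : B * A = c • 1 := by
  have : A * (c⁻¹ • B) = 1 := by rw [Matrix.mul_smul, h, smul_smul, inv_mul_cancel₀ hc, one_smul]
  rw [← one_smul K (B * A), ← mul_inv_cancel₀ hc, ← smul_smul, ← smul_mul,
    mul_eq_one_comm.mp this]

theorem star_mulVec_dotProduct_mulVec [CommRing R] [StarRing R] {A : Matrix ι ι R} {c : R}
    (h : Aᴴ * A = c • 1) (v : ι → R) :
    star (A *ᵥ v) ⬝ᵥ (A *ᵥ v) = c * (star v ⬝ᵥ v) := by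
  rw [star_mulVec, ← dotProduct_mulVec, mulVec_mulVec, h, smul_mulVec, one_mulVec,
    dotProduct_smul, smul_eq_mul]

end Matrix

section Chain

variable {ι R : Type*} [Fintype ι]

def chainVec [CommSemiring R] (a : Matrix ι ι R) : (m : ℕ) → (Fin (m + 1) → ι → R) → ι → R
  | 0, x => x 0
  | m + 1, x => x 0 * a *ᵥ chainVec a m (Fin.tail x)

def chainForm [CommSemiring R] (a : Matrix ι ι R) {m : ℕ} (x : Fin (m + 1) → ι → R) : R :=
  ∑ i : Fin (m + 1) → ι, (∏ l : Fin m, a (i l.castSucc) (i l.succ)) * ∏ l, x l (i l)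

theorem chainVec_apply [CommSemiring R] (a : Matrix ι ι R) (m : ℕ) (x : Fin (m + 1) → ι → R)
    (j : ι) :
    chainVec a m x j = ∑ i : Fin m → ι,
      (∏ l : Fin m, a ((Fin.cons j i : Fin (m + 1) → ι) l.castSucc)
        ((Fin.cons j i : Fin (m + 1) → ι) l.succ)) *
        ∏ l, x l ((Fin.cons j i : Fin (m + 1) → ι) l) := by
  induction m generalizing j with
  | zero => simp [chainVec]
  | succ m ih =>
    rw [chainVec, Pi.mul_apply, Matrix.mulVec, dotProduct, Finset.mul_sum,
      ← (Fin.consEquiv fun _ => ι).sum_comp, Fintype.sum_prod_type]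
    refine Finset.sum_congr rfl fun k _ => ?_
    rw [ih, Finset.mul_sum, Finset.mul_sum]
    refine Finset.sum_congr rfl fun i _ => ?_
    simp only [Fin.consEquiv_apply, Fin.prod_univ_succ, Fin.cons_zero, Fin.cons_succ,
      Fin.castSucc_zero, ← Fin.succ_castSucc, Fin.tail]
    ring

theorem chainForm_eq_sum_chainVec [CommSemiring R] (a : Matrix ι ι R) {m : ℕ}
    (x : Fin (m + 1) → ι → R) : chainForm a x = ∑ j, chainVec a m x j := by
  simp only [chainForm, chainVec_apply, ← (Fin.consEquiv fun _ => ι).sum_comp,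
    Fintype.sum_prod_type]
  rfl

section RCLike

variable {𝕜 : Type*} [RCLike 𝕜]

theorem sum_norm_sq_mulVec [DecidableEq ι] {A : Matrix ι ι 𝕜} {c : ℝ}
    (h : Aᴴ * A = (c : 𝕜) • 1) (v : ι → 𝕜) : ∑ j, ‖(A *ᵥ v) j‖ ^ 2 = c * ∑ j, ‖v j‖ ^ 2 := by
  apply RCLike.ofReal_injective (K := 𝕜)
  have := Matrix.star_mulVec_dotProduct_mulVec h v
  simp only [dotProduct, Pi.star_apply, RCLike.star_def, RCLike.conj_mul] at this
  push_cast
  exact this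

theorem sum_norm_sq_mul_le {x v : ι → 𝕜} (hx : ∀ j, ‖x j‖ ≤ 1) :
    ∑ j, ‖(x * v) j‖ ^ 2 ≤ ∑ j, ‖v j‖ ^ 2 := by
  refine Finset.sum_le_sum fun j _ => ?_
  rw [Pi.mul_apply, norm_mul, mul_pow]
  exact mul_le_of_le_one_left (by positivity) (pow_le_one₀ (norm_nonneg _) (hx j))

theorem sum_norm_sq_le_card {x : ι → 𝕜} (hx : ∀ j, ‖x j‖ ≤ 1) :
    ∑ j, ‖x j‖ ^ 2 ≤ Fintype.card ι := by
  simpa using sum_norm_sq_mul_le (v := fun _ => (1 : 𝕜)) hx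

theorem norm_sum_sq_le_card_mul (v : ι → 𝕜) :
    ‖∑ j, v j‖ ^ 2 ≤ Fintype.card ι * ∑ j, ‖v j‖ ^ 2 :=
  (pow_le_pow_left₀ (norm_nonneg _) (norm_sum_le _ _) 2).trans (sq_sum_le_card_mul_sum_sq ..)

variable [DecidableEq ι] {a : Matrix ι ι 𝕜} {c : ℝ}

theorem sum_norm_sq_chainVec_le (hc : 0 ≤ c) (h : aᴴ * a = (c : 𝕜) • 1) {m : ℕ}
    {x : Fin (m + 1) → ι → 𝕜} (hx : ∀ l j, ‖x l j‖ ≤ 1) :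
    ∑ j, ‖chainVec a m x j‖ ^ 2 ≤ Fintype.card ι * c ^ m := by
  induction m with
  | zero => simpa [chainVec] using sum_norm_sq_le_card (hx 0)
  | succ m ih =>
    calc ∑ j, ‖chainVec a (m + 1) x j‖ ^ 2
        ≤ ∑ j, ‖(a *ᵥ chainVec a m (Fin.tail x)) j‖ ^ 2 := sum_norm_sq_mul_le (hx 0)
      _ = c * ∑ j, ‖chainVec a m (Fin.tail x) j‖ ^ 2 := sum_norm_sq_mulVec h _
      _ ≤ c * (Fintype.card ι * c ^ m) :=
        mul_le_mul_of_nonneg_left (ih fun l => hx l.succ) hc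
      _ = Fintype.card ι * c ^ (m + 1) := by ring

theorem norm_chainForm_sq_le (hc : 0 ≤ c) (h : aᴴ * a = (c : 𝕜) • 1) {m : ℕ}
    {x : Fin (m + 1) → ι → 𝕜} (hx : ∀ l j, ‖x l j‖ ≤ 1) :
    ‖chainForm a x‖ ^ 2 ≤ Fintype.card ι ^ 2 * c ^ m := by
  rw [chainForm_eq_sum_chainVec]
  calc ‖∑ j, chainVec a m x j‖ ^ 2 ≤ Fintype.card ι * ∑ j, ‖chainVec a m x j‖ ^ 2 :=
        norm_sum_sq_le_card_mul _
    _ ≤ Fintype.card ι * (Fintype.card ι * c ^ m) :=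
        mul_le_mul_of_nonneg_left (sum_norm_sq_chainVec_le hc h hx) (Nat.cast_nonneg _)
    _ = Fintype.card ι ^ 2 * c ^ m := by ring

end RCLike

end Chain

/-- Let `a` be an `n × n` complex matrix with unimodular entries and orthogonal rows
(`∑_k a_{rk} conj(a_{sk}) = n δ_{rs}`). Then the `m`-linear form with coefficients
`a_{i₁ i₂} a_{i₂ i₃} ⋯ a_{i_{m-1} i_m}` satisfies `|A(x¹,…,xᵐ)| ≤ n^{(m+1)/2}` for all
vectors `x¹,…,xᵐ ∈ ℂⁿ` of sup-norm at most `1`. -/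
theorem stmt5 (m n : ℕ) (hm : 2 ≤ m) (a : Fin n → Fin n → ℂ)
    (horth : ∀ r s : Fin n,
      ∑ k : Fin n, a r k * conj (a s k) = if r = s then (n : ℂ) else 0)
    (x : Fin m → Fin n → ℂ) (hx : ∀ (l : Fin m) (i : Fin n), ‖x l i‖ ≤ 1) :
    ‖∑ i : Fin m → Fin n,
        (∏ l : Fin (m - 1),
            a (i (l.castLE (Nat.sub_le m 1))) (i ⟨l.val + 1, by omega⟩)) *
          ∏ l : Fin m, x l (i l)‖
      ≤ (n : ℝ) ^ (((m : ℝ) + 1) / 2) := by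
  obtain ⟨t, rfl⟩ : ∃ t, m = t + 1 := ⟨m - 1, by omega⟩
  have hrows : Matrix.of a * (Matrix.of a)ᴴ = ((n : ℝ) : ℂ) • 1 := by
    ext r s
    simpa [Matrix.mul_apply, Matrix.one_apply] using horth r s
  have hcols : (Matrix.of a)ᴴ * Matrix.of a = ((n : ℝ) : ℂ) • 1 := by
    rcases eq_or_ne n 0 with rfl | hn
    · ext i; exact i.elim0
    · exact Matrix.mul_eq_smul_one_comm (by simpa using hn) hrows
  have hsq := norm_chainForm_sq_le (Nat.cast_nonneg n) hcols hx
  rw [Fintype.card_fin, ← pow_add] at hsq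
  change ‖chainForm (Matrix.of a) x‖ ≤ _
  calc ‖chainForm (Matrix.of a) x‖ ≤ √((n : ℝ) ^ (2 + t)) := Real.le_sqrt_of_sq_le hsq
    _ = (n : ℝ) ^ (((t + 1 : ℕ) + 1 : ℝ) / 2) := by
      rw [Real.sqrt_eq_rpow, ← Real.rpow_natCast, ← Real.rpow_mul (Nat.cast_nonneg n)]
      push_cast
      ring_nf
end

section
/- Let X be a symmetric Banach sequence space (over finite index sets) and m ∈ ℕ such that there exists C ≥ 1 with ‖(a_i)_{i∈M(m,n)}‖_X ≤ C ‖a‖_∞ for every n and every complex matrix a indexed by M(m,n) = {1,…,n}^m, where ‖a‖_∞ is the supremum of |∑ a_i x^1_{i_1}⋯x^m_{i_m}| over all choice of vectors of sup-norm ≤ 1. Then the fundamental function φ_X(n) = ‖∑_{i=1}^n e_i‖_X satisfies φ_X(n) ≤ C(m) n^{(m+1)/(2m)} for some constant C(m) depending only on m and C. -/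
/-!
Take a complex Hadamard matrix `U` of size `t` (unimodular entries, `U Uᴴ = t`), e.g. the DFT
matrix, and the unimodular `m`-matrix `a i = ∏ₛ U iₛ iₛ₊₁` on `{1,…,t}^m`, so that
`φ(t^m) ≤ ‖a‖_X ≤ C ‖a‖_∞`. In the multilinear form of `a`, summing out `i₁` replaces `x¹` by
`x¹ ᵥ* U`, which multiplies its ℓ²-norm by `√t`, and multiplying pointwise by `x²` does not
increase it; iterating and ending with Cauchy–Schwarz gives `‖a‖_∞ ≤ √t ^ (m + 1)`. For general
`n` take `t = ⌈n^{1/m}⌉ ≤ 2 n^{1/m}`.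
-/

open Matrix

section ChainMatrix

variable {ι : Type*}

def chainMatrix (U : Matrix ι ι ℂ) (M : ℕ) (i : Fin (M + 1) → ι) : ℂ :=
  ∏ s : Fin M, U (i s.castSucc) (i s.succ)

theorem chainMatrix_cons (U : Matrix ι ι ℂ) (M : ℕ) (j : ι) (i : Fin (M + 1) → ι) :
    chainMatrix U (M + 1) (Fin.cons j i) = U j (i 0) * chainMatrix U M i := by
  simp [chainMatrix, Fin.prod_univ_succ]

theorem norm_chainMatrix {U : Matrix ι ι ℂ} (hU : ∀ j k, ‖U j k‖ = 1) (M : ℕ)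
    (i : Fin (M + 1) → ι) : ‖chainMatrix U M i‖ = 1 := by
  simp [chainMatrix, hU]

variable [Fintype ι]

def IsComplexHadamard [DecidableEq ι] (U : Matrix ι ι ℂ) : Prop :=
  (∀ j k, ‖U j k‖ = 1) ∧ U * Uᴴ = (Fintype.card ι : ℂ) • 1

theorem sum_norm_sq_vecMul [DecidableEq ι] {U : Matrix ι ι ℂ}
    (hU : U * Uᴴ = (Fintype.card ι : ℂ) • 1) (v : ι → ℂ) :
    ∑ k, ‖(v ᵥ* U) k‖ ^ 2 = Fintype.card ι * ∑ j, ‖v j‖ ^ 2 := by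
  have key : (v ᵥ* U) ⬝ᵥ star (v ᵥ* U) = (Fintype.card ι : ℂ) * (v ⬝ᵥ star v) := by
    rw [star_vecMul, dotProduct_mulVec, vecMul_vecMul, hU, vecMul_smul, vecMul_one,
      smul_dotProduct, smul_eq_mul]
  simp only [dotProduct, Pi.star_apply, Complex.star_def, Complex.mul_conj'] at key
  exact_mod_cast key

def multilinearSum {m : ℕ} (a : (Fin m → ι) → ℂ) (x : Fin m → ι → ℂ) : ℂ :=
  ∑ i, a i * ∏ l, x l (i l)

theorem multilinearSum_chainMatrix_succ (U : Matrix ι ι ℂ) (M : ℕ) (v : ι → ℂ)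
    (w : Fin (M + 1) → ι → ℂ) :
    multilinearSum (chainMatrix U (M + 1)) (Fin.cons v w) =
      multilinearSum (chainMatrix U M) (Fin.cons (w 0 * v ᵥ* U) (Fin.tail w)) := by
  unfold multilinearSum
  rw [← (Fin.consEquiv fun _ => ι).sum_comp, Fintype.sum_prod_type, Finset.sum_comm]
  refine Finset.sum_congr rfl fun i _ => ?_
  simp only [Fin.consEquiv, Equiv.coe_fn_mk, chainMatrix_cons, Fin.prod_univ_succ, Fin.cons_zero,
    Fin.cons_succ, Pi.mul_apply, vecMul, dotProduct, Fin.tail, Finset.mul_sum, Finset.sum_mul]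
  refine Finset.sum_congr rfl fun j _ => ?_
  ring

theorem norm_multilinearSum_chainMatrix_cons_le [DecidableEq ι] {U : Matrix ι ι ℂ}
    (hU : U * Uᴴ = (Fintype.card ι : ℂ) • 1) (M : ℕ) (v : ι → ℂ) (w : Fin M → ι → ℂ)
    (hw : ∀ l j, ‖w l j‖ ≤ 1) :
    ‖multilinearSum (chainMatrix U M) (Fin.cons v w)‖ ≤
      √(Fintype.card ι) ^ (M + 1) * √(∑ j, ‖v j‖ ^ 2) := by
  induction M generalizing v with
  | zero =>
    have hsum : multilinearSum (chainMatrix U 0) (Fin.cons v w) = ∑ j, v j := by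
      rw [multilinearSum, ← (Equiv.funUnique (Fin 1) ι).symm.sum_comp]
      simp [chainMatrix]
    have hcs : (∑ j, ‖v j‖) ^ 2 ≤ Fintype.card ι * ∑ j, ‖v j‖ ^ 2 := by
      simpa using sq_sum_le_card_mul_sum_sq (s := Finset.univ) (f := fun j => ‖v j‖)
    rw [hsum, pow_one, ← Real.sqrt_mul (Nat.cast_nonneg _)]
    exact (norm_sum_le _ _).trans (Real.le_sqrt_of_sq_le hcs)
  | succ M ih =>
    rw [multilinearSum_chainMatrix_succ]
    refine (ih _ _ fun l j => hw l.succ j).trans ?_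
    have hmul : ∑ k, ‖(w 0 * v ᵥ* U) k‖ ^ 2 ≤ Fintype.card ι * ∑ j, ‖v j‖ ^ 2 := by
      rw [← sum_norm_sq_vecMul hU]
      refine Finset.sum_le_sum fun k _ => ?_
      rw [Pi.mul_apply, norm_mul, mul_pow]
      exact mul_le_of_le_one_left (by positivity) (pow_le_one₀ (norm_nonneg _) (hw 0 k))
    calc √(Fintype.card ι) ^ (M + 1) * √(∑ k, ‖(w 0 * v ᵥ* U) k‖ ^ 2)
        ≤ √(Fintype.card ι) ^ (M + 1) * (√(Fintype.card ι) * √(∑ j, ‖v j‖ ^ 2)) := by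
          rw [← Real.sqrt_mul (Nat.cast_nonneg _)]
          gcongr
      _ = √(Fintype.card ι) ^ (M + 2) * √(∑ j, ‖v j‖ ^ 2) := by ring

theorem norm_multilinearSum_chainMatrix_le [DecidableEq ι] {U : Matrix ι ι ℂ}
    (hU : U * Uᴴ = (Fintype.card ι : ℂ) • 1) (M : ℕ) (x : Fin (M + 1) → ι → ℂ)
    (hx : ∀ l j, ‖x l j‖ ≤ 1) :
    ‖multilinearSum (chainMatrix U M) x‖ ≤ √(Fintype.card ι) ^ (M + 2) := by
  have hx0 : ∑ j, ‖x 0 j‖ ^ 2 ≤ Fintype.card ι := by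
    simpa using Finset.sum_le_sum fun j (_ : j ∈ Finset.univ) =>
      pow_le_one₀ (norm_nonneg _) (hx 0 j)
  rw [← Fin.cons_self_tail x]
  calc _ ≤ √(Fintype.card ι) ^ (M + 1) * √(∑ j, ‖x 0 j‖ ^ 2) :=
        norm_multilinearSum_chainMatrix_cons_le hU M _ _ fun l j => hx l.succ j
    _ ≤ √(Fintype.card ι) ^ (M + 1) * √(Fintype.card ι) := by gcongr
    _ = √(Fintype.card ι) ^ (M + 2) := by ring

end ChainMatrix

theorem IsPrimitiveRoot.vandermonde_mul_conjTranspose {ζ : ℂ} {t : ℕ} (hζ : IsPrimitiveRoot ζ t) :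
    vandermonde (fun j : Fin t => ζ ^ (j : ℕ)) * (vandermonde fun j : Fin t => ζ ^ (j : ℕ))ᴴ =
      (t : ℂ) • 1 := by
  ext j j'
  have ht : t ≠ 0 := j.pos.ne'
  set ρ := ζ ^ (j : ℕ) * star (ζ ^ (j' : ℕ))
  have hρt : ρ ^ t = 1 := by
    rw [mul_pow, ← star_pow, ← pow_mul, ← pow_mul, mul_comm _ t, mul_comm _ t, pow_mul, pow_mul,
      hζ.pow_eq_one, one_pow, one_pow, star_one, mul_one]
  have hρ : ρ = 1 ↔ j = j' := by
    have hunit : ζ ^ (j' : ℕ) * star (ζ ^ (j' : ℕ)) = 1 := by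
      rw [Complex.star_def, Complex.mul_conj', norm_pow, hζ.norm'_eq_one ht]
      simp
    have hne : star (ζ ^ (j' : ℕ)) ≠ 0 := right_ne_zero_of_mul_eq_one hunit
    rw [← hunit, mul_left_inj' hne, Fin.ext_iff]
    exact ⟨fun h => hζ.pow_inj j.isLt j'.isLt h, fun h => by rw [h]⟩
  have hterm (k : ℕ) : (ζ ^ (j : ℕ)) ^ k * star ((ζ ^ (j' : ℕ)) ^ k) = ρ ^ k := by
    rw [star_pow, mul_pow]
  simp only [mul_apply, vandermonde_apply, conjTranspose_apply, Matrix.smul_apply, one_apply,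
    hterm, Fin.sum_univ_eq_sum_range (fun k => ρ ^ k)]
  by_cases h : j = j'
  · simp [h, hρ.mpr h]
  · rw [geom_sum_eq (mt hρ.mp h), hρt]
    simp [h]

theorem exists_isComplexHadamard (t : ℕ) : ∃ U : Matrix (Fin t) (Fin t) ℂ, IsComplexHadamard U := by
  rcases Nat.eq_zero_or_pos t with rfl | ht
  · exact ⟨0, finZeroElim, Subsingleton.elim _ _⟩
  set ζ := Complex.exp (2 * Real.pi * Complex.I / t)
  have hζ : IsPrimitiveRoot ζ t := Complex.isPrimitiveRoot_exp t ht.ne'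
  refine ⟨vandermonde fun j : Fin t => ζ ^ (j : ℕ), fun j k => ?_, ?_⟩
  · simp [hζ.norm'_eq_one ht.ne']
  · simpa using hζ.vandermonde_mul_conjTranspose

theorem norm_indicator_le_norm_extend {κ : Type*} {K N : ℕ} (e : κ ≃ Fin K) {a : κ → ℂ}
    (ha : ∀ i, ‖a i‖ = 1) (hN : N ≤ K) (j : ℕ) :
    ‖(if j < N then 1 else 0 : ℂ)‖ ≤ ‖Function.extend (fun i => (e i : ℕ)) a (fun _ => 0) j‖ := by
  split_ifs with hj
  · have hinj : Function.Injective fun i => (e i : ℕ) := Fin.val_injective.comp e.injective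
    obtain ⟨i, rfl⟩ : ∃ i, (e i : ℕ) = j := ⟨e.symm ⟨j, hj.trans_le hN⟩, by simp⟩
    rw [hinj.extend_apply, ha, norm_one]
  · simp

theorem exists_le_pow_and_sqrt_pow_le {m : ℕ} (hm : m ≠ 0) (N : ℕ) :
    ∃ t : ℕ, N ≤ t ^ m ∧ √t ^ (m + 1) ≤ √2 ^ (m + 1) * (N : ℝ) ^ (((m : ℝ) + 1) / (2 * m)) := by
  set x := (N : ℝ) ^ (m⁻¹ : ℝ)
  have hx0 : 0 ≤ x := by positivity
  have hxm : x ^ m = N := Real.rpow_inv_natCast_pow (Nat.cast_nonneg N) hm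
  have hceil : (⌈x⌉₊ : ℝ) ≤ 2 * x := by
    rcases Nat.eq_zero_or_pos N with rfl | hN
    · simp [x, hm]
    · refine Nat.ceil_le_two_mul ?_
      have : (1 : ℝ) ≤ x := Real.one_le_rpow (by exact_mod_cast hN) (by positivity)
      linarith
  have hsqrtx : √x ^ (m + 1) = (N : ℝ) ^ (((m : ℝ) + 1) / (2 * m)) := by
    rw [Real.sqrt_eq_rpow, ← Real.rpow_mul (Nat.cast_nonneg N), ← Real.rpow_natCast,
      ← Real.rpow_mul (Nat.cast_nonneg N)]
    congr 1
    field_simp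
    push_cast
    ring
  refine ⟨⌈x⌉₊, ?_, ?_⟩
  · have : (N : ℝ) ≤ (⌈x⌉₊ : ℝ) ^ m := hxm ▸ pow_le_pow_left₀ hx0 (Nat.le_ceil x) m
    exact_mod_cast this
  · calc √⌈x⌉₊ ^ (m + 1) ≤ √(2 * x) ^ (m + 1) := by gcongr
      _ = √2 ^ (m + 1) * (N : ℝ) ^ (((m : ℝ) + 1) / (2 * m)) := by
        rw [Real.sqrt_mul zero_le_two, mul_pow, hsqrtx]

theorem stmt6_general (m : ℕ) (hm : 1 ≤ m) (ν : (ℕ → ℂ) → ℝ) (C : ℝ)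
    (hmono : ∀ x y : ℕ → ℂ, (∀ i, ‖x i‖ ≤ ‖y i‖) → ν x ≤ ν y)
    (hBH : ∀ (n : ℕ) (a : (Fin m → Fin n) → ℂ) (e : (Fin m → Fin n) → ℕ),
      Function.Injective e →
      ∀ D : ℝ,
        (∀ x : Fin m → Fin n → ℂ, (∀ (l : Fin m) (i : Fin n), ‖x l i‖ ≤ 1) →
          ‖∑ i : Fin m → Fin n, a i * ∏ l : Fin m, x l (i l)‖ ≤ D) →
        ν (Function.extend e a fun _ => 0) ≤ C * D) :
    ∃ K : ℝ, 0 < K ∧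
      ∀ n : ℕ, ν (fun j => if j < n then 1 else 0) ≤ K * (n : ℝ) ^ (((m : ℝ) + 1) / (2 * m)) := by
  obtain ⟨M, rfl⟩ : ∃ M, m = M + 1 := ⟨m - 1, by omega⟩
  refine ⟨max C 1 * √2 ^ (M + 2), by positivity, fun N => ?_⟩
  obtain ⟨t, hNt, hsqrt⟩ := exists_le_pow_and_sqrt_pow_le M.succ_ne_zero N
  obtain ⟨U, hU_norm, hU⟩ := exists_isComplexHadamard t
  let e : (Fin (M + 1) → Fin t) ≃ Fin (t ^ (M + 1)) := finFunctionFinEquiv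
  calc ν (fun j => if j < N then 1 else 0)
      ≤ ν (Function.extend (fun i => (e i : ℕ)) (chainMatrix U M) fun _ => 0) :=
        hmono _ _ (norm_indicator_le_norm_extend e (norm_chainMatrix hU_norm M) hNt)
    _ ≤ C * √t ^ (M + 2) := by
        refine hBH t _ _ (Fin.val_injective.comp e.injective) _ fun x hx => ?_
        simpa [multilinearSum] using norm_multilinearSum_chainMatrix_le hU M x hx
    _ ≤ max C 1 * √t ^ (M + 2) := by gcongr; exact le_max_left C 1
    _ ≤ _ := by
        rw [mul_assoc]
        gcongr

/-- Let `ν` be (the norm of) a symmetric Banach sequence space: invariant under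
permutations, depending only on moduli, and lattice-monotone. If there is `C ≥ 1` such
that for every `n` and every matrix `a` indexed by `M(m,n) = {1,…,n}^m` (viewed inside
the sequence space via any injective enumeration) one has `ν(a) ≤ C‖a‖_∞`, where `‖a‖_∞`
is the multilinear sup-norm on the polydisc, then the fundamental function
`φ(n) = ν(χ_{1,…,n})` satisfies `φ(n) ≤ K n^{(m+1)/(2m)}` for some constant `K`. -/
theorem stmt6 (m : ℕ) (hm : 1 ≤ m) (ν : (ℕ → ℂ) → ℝ) (C : ℝ) (hC : 1 ≤ C)
    (hperm : ∀ (x : ℕ → ℂ) (σ : Equiv.Perm ℕ), ν (x ∘ σ) = ν x)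
    (habs : ∀ x y : ℕ → ℂ, (∀ i, ‖x i‖ = ‖y i‖) → ν x = ν y)
    (hmono : ∀ x y : ℕ → ℂ, (∀ i, ‖x i‖ ≤ ‖y i‖) → ν x ≤ ν y)
    (hBH : ∀ (n : ℕ) (a : (Fin m → Fin n) → ℂ) (e : (Fin m → Fin n) → ℕ),
      Function.Injective e →
      ∀ D : ℝ,
        (∀ x : Fin m → Fin n → ℂ, (∀ (l : Fin m) (i : Fin n), ‖x l i‖ ≤ 1) →
          ‖∑ i : Fin m → Fin n, a i * ∏ l : Fin m, x l (i l)‖ ≤ D) →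
        ν (Function.extend e a fun _ => 0) ≤ C * D) :
    ∃ K : ℝ, 0 < K ∧
      ∀ n : ℕ, ν (fun j => if j < n then 1 else 0) ≤ K * (n : ℝ) ^ (((m : ℝ) + 1) / (2 * m)) :=
  stmt6_general m hm ν C hmono hBH
end

section
/- For every finite index set I with card(I) = n ≥ 2 and every 1 ≤ p < ∞, the identity map from ℓ_p(I) to ℓ_{p,1}(I) has norm at most C·log(n) for a universal constant C independent of n, p, and I. -/
/-- The Lorentz `ℓ_{p,1}` norm of a finite family: `∑_k x*_k (k^{1/p} - (k-1)^{1/p})`. -/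
noncomputable def lorentzNorm {ι : Type*} [Fintype ι] (p : ℝ) (x : ι → ℂ) : ℝ :=
  ∑ k ∈ Finset.range (Fintype.card ι),
    rearrF x k * (((k : ℝ) + 1) ^ (1 / p) - (k : ℝ) ^ (1 / p))

/-! Chebyshev's inequality gives `x*_{k+1} ≤ ‖x‖_p / (k+1)^{1/p}`, while
`(k+1)^{1/p} - k^{1/p} ≤ (k+1)^{1/p - 1}` because `t ↦ t^{1/p - 1}` is non-increasing. So the
`k`-th term of the Lorentz sum is at most `‖x‖_p / (k+1)`, whence `‖x‖_{p,1} ≤ H_n ‖x‖_p`, and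
`H_n ≤ 1 + log n ≤ 3 log n` once `n ≥ 2`. -/

open Finset

lemma card_mul_rpow_lt_sum_rpow {ι E : Type*} [Fintype ι] [SeminormedAddGroup E]
    (x : ι → E) {p l : ℝ} (hp : 0 < p) (hl : 0 ≤ l) (hne : 0 < Nat.card {i : ι // l < ‖x i‖}) :
    Nat.card {i : ι // l < ‖x i‖} * l ^ p < ∑ i, ‖x i‖ ^ p := by
  classical
  set T := univ.filter fun i => l < ‖x i‖
  have hcard : Nat.card {i : ι // l < ‖x i‖} = #T := by
    rw [Nat.card_eq_fintype_card, Fintype.card_subtype]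
  rw [hcard] at hne ⊢
  calc (#T : ℝ) * l ^ p = ∑ _i ∈ T, l ^ p := by rw [sum_const, nsmul_eq_mul]
    _ < ∑ i ∈ T, ‖x i‖ ^ p :=
      sum_lt_sum_of_nonempty (card_pos.mp hne) fun i hi =>
        Real.rpow_lt_rpow hl (mem_filter.mp hi).2 hp
    _ ≤ ∑ i, ‖x i‖ ^ p :=
      sum_le_sum_of_subset_of_nonneg (subset_univ T) fun i _ _ => by positivity

lemma rearrF_le_rpow {ι : Type*} [Fintype ι] (x : ι → ℂ) {p : ℝ} (hp : 0 < p) (k : ℕ) :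
    rearrF x k ≤ ((∑ i, ‖x i‖ ^ p) / (k + 1)) ^ (1 / p) := by
  set l := ((∑ i, ‖x i‖ ^ p) / (k + 1)) ^ (1 / p)
  have hl : 0 ≤ l := by positivity
  have hlp : l ^ p = (∑ i, ‖x i‖ ^ p) / (k + 1) := by
    rw [← Real.rpow_mul (by positivity), one_div_mul_cancel hp.ne', Real.rpow_one]
  refine csInf_le ⟨0, fun _ h => h.1⟩ ⟨hl, ?_⟩
  by_contra! hcard
  have hlt := card_mul_rpow_lt_sum_rpow x hp hl (by omega)
  have hge : ((k : ℝ) + 1) * l ^ p ≤ Nat.card {i : ι // l < ‖x i‖} * l ^ p :=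
    mul_le_mul_of_nonneg_right (by exact_mod_cast hcard) (by positivity)
  rw [hlp] at hlt hge
  rw [mul_div_cancel₀ _ (by positivity)] at hge
  linarith

lemma rpow_add_one_sub_rpow_le {x a : ℝ} (hx : 0 ≤ x) (ha : a ≤ 1) :
    (x + 1) ^ a - x ^ a ≤ (x + 1) ^ (a - 1) := by
  have hx1 : x + 1 ≠ 0 := by positivity
  have hlower : x * (x + 1) ^ (a - 1) ≤ x ^ a := by
    rcases hx.eq_or_lt with rfl | hx
    · simpa using Real.rpow_nonneg le_rfl a
    · calc x * (x + 1) ^ (a - 1) ≤ x * x ^ (a - 1) :=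
            mul_le_mul_of_nonneg_left
              (Real.rpow_le_rpow_of_nonpos hx (by linarith) (by linarith)) hx.le
        _ = x ^ a := by rw [Real.rpow_sub_one hx.ne', mul_div_cancel₀ _ hx.ne']
  have hsplit : (x + 1) ^ a = (x + 1) * (x + 1) ^ (a - 1) := by
    rw [Real.rpow_sub_one hx1, mul_div_cancel₀ _ hx1]
  linarith [hlower]

lemma rearrF_mul_rpow_sub_le {ι : Type*} [Fintype ι] (x : ι → ℂ) {p : ℝ} (hp : 1 ≤ p) (k : ℕ) :
    rearrF x k * (((k : ℝ) + 1) ^ (1 / p) - (k : ℝ) ^ (1 / p))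
      ≤ (∑ i, ‖x i‖ ^ p) ^ (1 / p) / (k + 1) := by
  have hp0 : 0 < p := by linarith
  have hk : (0 : ℝ) < k + 1 := by positivity
  calc rearrF x k * (((k : ℝ) + 1) ^ (1 / p) - (k : ℝ) ^ (1 / p))
      ≤ ((∑ i, ‖x i‖ ^ p) / (k + 1)) ^ (1 / p) * ((k : ℝ) + 1) ^ (1 / p - 1) := by
        refine mul_le_mul (rearrF_le_rpow x hp0 k)
          (rpow_add_one_sub_rpow_le k.cast_nonneg ((div_le_one hp0).mpr hp)) ?_ (by positivity)
        exact sub_nonneg.mpr (by gcongr; linarith)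
    _ = (∑ i, ‖x i‖ ^ p) ^ (1 / p) / (k + 1) := by
        rw [Real.div_rpow (by positivity) hk.le, Real.rpow_sub_one hk.ne']
        field_simp

lemma lorentzNorm_le_harmonic_mul {ι : Type*} [Fintype ι] (x : ι → ℂ) {p : ℝ} (hp : 1 ≤ p) :
    lorentzNorm p x ≤ harmonic (Fintype.card ι) * (∑ i, ‖x i‖ ^ p) ^ (1 / p) := by
  rw [lorentzNorm, harmonic, Rat.cast_sum, sum_mul]
  refine sum_le_sum fun k _ => (rearrF_mul_rpow_sub_le x hp k).trans_eq ?_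
  push_cast
  ring

lemma harmonic_le_three_mul_log {n : ℕ} (hn : 2 ≤ n) : (harmonic n : ℝ) ≤ 3 * Real.log n := by
  have hlog : Real.log 2 ≤ Real.log n := Real.log_le_log (by norm_num) (by exact_mod_cast hn)
  linarith [harmonic_le_one_add_log n, Real.log_two_gt_d9]

/-- There is a universal constant `C > 0` such that for every finite index set `I` of
cardinality `n ≥ 2` and every `1 ≤ p < ∞`, the identity `ℓ_p(I) → ℓ_{p,1}(I)` has norm
at most `C log n`: `‖x‖_{ℓ_{p,1}} ≤ C log n · ‖x‖_{ℓ_p}`. -/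
theorem stmt8 :
    ∃ C : ℝ, 0 < C ∧
      ∀ (n : ℕ), 2 ≤ n →
      ∀ (p : ℝ), 1 ≤ p →
      ∀ (ι : Type) (_ : Fintype ι), Fintype.card ι = n →
      ∀ x : ι → ℂ,
        lorentzNorm p x ≤ C * Real.log n * (∑ i : ι, ‖x i‖ ^ p) ^ (1 / p) := by
  refine ⟨3, by norm_num, fun n hn p hp ι _ hcard x => ?_⟩
  subst hcard
  calc lorentzNorm p x ≤ harmonic (Fintype.card ι) * (∑ i, ‖x i‖ ^ p) ^ (1 / p) :=
        lorentzNorm_le_harmonic_mul x hp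
    _ ≤ 3 * Real.log (Fintype.card ι) * (∑ i, ‖x i‖ ^ p) ^ (1 / p) := by
        gcongr
        exact harmonic_le_three_mul_log hn
end

section
/- Let m, n ∈ ℕ. For every symmetric matrix a = (a_i)_{i∈M(m,n)}, the diagonal operator D(m,n) sending a to (card[j]^{(m+1)/(2m)} a_j)_{j∈J(m,n)} satisfies ‖D(m,n)a‖_{ℓ_2(J(m,n))} ≤ √m · ‖a‖_{ℓ_2(M(m,n))}. -/
open scoped Classical

/-- `cardClass j` is the number of tuples in `M(m,n) = {1,…,n}^m` obtained by permuting
the coordinates of `j`. -/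
noncomputable def cardClass {m n : ℕ} (j : Fin m → Fin n) : ℕ :=
  Nat.card {i : Fin m → Fin n // ∃ σ : Equiv.Perm (Fin m), i = j ∘ σ}

/-!
Sorting the coordinates sends each tuple `i ∈ M(m,n)` to the unique non-decreasing tuple in its
permutation class, whose fibre therefore has `card[j]` elements. Summing a symmetric function
fibrewise gives `∑_{j ∈ J} card[j] |a_j|² = ∑_{i ∈ M} |a_i|²`, and the weights are harmless because
`card[j]^{(m+1)/m} = card[j] · card[j]^{1/m} ≤ m · card[j]` as `card[j] ≤ m! ≤ m^m`.
-/

open Finset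

namespace Real

lemma sq_rpow_succ_div_two_mul_le {c : ℝ} {m : ℕ} (hm : 0 < m) (hc : 0 ≤ c) (hcm : c ≤ m ^ m) :
    (c ^ (((m : ℝ) + 1) / (2 * m))) ^ 2 ≤ m * c := by
  have hm' : (0 : ℝ) < m := by exact_mod_cast hm
  have hroot : c ^ (m⁻¹ : ℝ) ≤ m :=
    (rpow_inv_le_iff_of_pos hc hm'.le hm').2 (by rwa [rpow_natCast])
  have hexp : ((m : ℝ) + 1) / (2 * m) * 2 = 1 + (m⁻¹ : ℝ) := by field_simp
  calc (c ^ (((m : ℝ) + 1) / (2 * m))) ^ 2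
      = c * c ^ (m⁻¹ : ℝ) := by
        rw [← rpow_mul_natCast hc, Nat.cast_ofNat, hexp, rpow_add' hc (by positivity), rpow_one]
    _ ≤ c * m := mul_le_mul_of_nonneg_left hroot hc
    _ = m * c := mul_comm _ _

end Real

section cardClass

variable {m n : ℕ}

lemma cardClass_eq_card_filter (j : Fin m → Fin n) :
    cardClass j = #{i | ∃ σ : Equiv.Perm (Fin m), i = j ∘ σ} := by
  rw [cardClass, Nat.card_eq_fintype_card, Fintype.card_subtype]

lemma cardClass_le_factorial (j : Fin m → Fin n) : cardClass j ≤ m.factorial := by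
  have hsurj : Function.Surjective fun σ : Equiv.Perm (Fin m) =>
      (⟨j ∘ σ, σ, rfl⟩ : {i : Fin m → Fin n // ∃ σ : Equiv.Perm (Fin m), i = j ∘ σ}) := by
    rintro ⟨i, σ, rfl⟩
    exact ⟨σ, rfl⟩
  simpa [cardClass, Fintype.card_perm] using Nat.card_le_card_of_surjective _ hsurj

lemma comp_sort_eq_iff_exists_perm {j : Fin m → Fin n} (hj : Monotone j) (i : Fin m → Fin n) :
    i ∘ Tuple.sort i = j ↔ ∃ σ : Equiv.Perm (Fin m), i = j ∘ σ := by
  constructor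
  · rintro rfl
    exact ⟨(Tuple.sort i)⁻¹, by ext; simp⟩
  · rintro ⟨σ, rfl⟩
    rw [Tuple.comp_perm_comp_sort_eq_comp_sort, Tuple.sort_eq_refl_iff_monotone.2 hj]
    rfl

lemma sum_monotone_cardClass_smul {M : Type*} [AddCommMonoid M] (f : (Fin m → Fin n) → M)
    (hf : ∀ (i : Fin m → Fin n) (σ : Equiv.Perm (Fin m)), f (i ∘ σ) = f i) :
    ∑ j with Monotone j, cardClass j • f j = ∑ i, f i := by
  rw [← sum_fiberwise_of_maps_to (s := univ) (g := fun i => i ∘ Tuple.sort i) (f := f)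
    (fun i _ => mem_filter.2 ⟨mem_univ _, Tuple.monotone_sort i⟩)]
  refine sum_congr rfl fun j hj => ?_
  simp only [comp_sort_eq_iff_exists_perm (mem_filter.1 hj).2]
  rw [cardClass_eq_card_filter, ← sum_const]
  refine sum_congr rfl fun i hi => ?_
  obtain ⟨σ, rfl⟩ := (mem_filter.1 hi).2
  exact (hf j σ).symm

end cardClass

/-- For every symmetric matrix `a` on `M(m,n)` the diagonal operator
`D(m,n) : a ↦ (card[j]^{(m+1)/(2m)} a_j)_{j ∈ J(m,n)}` satisfies
`‖D(m,n)a‖_{ℓ_2(J(m,n))} ≤ √m · ‖a‖_{ℓ_2(M(m,n))}`. -/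
theorem stmt12 (m n : ℕ) (hm : 1 ≤ m) (a : (Fin m → Fin n) → ℂ)
    (hsymm : ∀ (i : Fin m → Fin n) (σ : Equiv.Perm (Fin m)), a (i ∘ σ) = a i) :
    Real.sqrt (∑ j ∈ Finset.univ.filter (fun j : Fin m → Fin n => Monotone j),
        ((cardClass j : ℝ) ^ (((m : ℝ) + 1) / (2 * m)) * ‖a j‖) ^ 2)
      ≤ Real.sqrt m * Real.sqrt (∑ i : Fin m → Fin n, ‖a i‖ ^ 2) := by
  have hweight (j : Fin m → Fin n) :
      ((cardClass j : ℝ) ^ (((m : ℝ) + 1) / (2 * m)) * ‖a j‖) ^ 2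
        ≤ m * (cardClass j • ‖a j‖ ^ 2) := by
    have hcard : (cardClass j : ℝ) ≤ (m : ℝ) ^ m := by
      exact_mod_cast (cardClass_le_factorial j).trans m.factorial_le_pow
    rw [mul_pow, nsmul_eq_mul, ← mul_assoc]
    gcongr
    exact Real.sq_rpow_succ_div_two_mul_le hm (Nat.cast_nonneg _) hcard
  rw [← Real.sqrt_mul (Nat.cast_nonneg m)]
  refine Real.sqrt_le_sqrt ?_
  calc _ ≤ ∑ j with Monotone j, (m : ℝ) * (cardClass j • ‖a j‖ ^ 2) :=
        sum_le_sum fun j _ => hweight j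
    _ = m * ∑ i, ‖a i‖ ^ 2 := by
        rw [← mul_sum, sum_monotone_cardClass_smul _ fun i σ => by rw [hsymm]]
end
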